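/- arXiv:2505.19068 — 4 statements merged into one kernel-verified Lean document; each statement's English description precedes it below -/
import Mathlib

section
/- Let X be a random feature with values in a measurable space 𝒳 and Y a label with values in {0,1}, with source distribution P and target distribution Q of (X,Y) such that 0 < P[Y=1] < 1 and 0 < Q[Y=1] < 1. Suppose P and Q are related through label shift, i.e., P[X ∈ M | Y = y] = Q[X ∈ M | Y = y] for all measurable M ⊆ 𝒳 and y ∈ {0,1}. Let η_P(X) be a version of P[Y=1 | X] and η_Q(X) a version of Q[Y=1 | X], and define the scores S = η_P(X) and S* = η_Q(X). Then the AUC of S computed under P equals the AUC of S* computed under Q: AUC_S = AUC_{S*}. -/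
/-! Label shift keeps the class-conditional feature laws and only changes the class weights, by
factors `c_y = Q[Y = y] / P[Y = y]`. Hence the target feature marginal has density
`g = c₁ η_P + c₀ (1 - η_P)` with respect to the source one, and comparing the defining integrals
of the two posteriors gives `g η_Q = c₁ η_P`, i.e. `η_Q = ψ ∘ η_P` almost everywhere with
`ψ s = c₁ s / (c₁ s + c₀ (1 - s))`. This `ψ` is strictly increasing on `[0, 1]`, where `η_P`
takes its values, and the AUC only depends on the order of the scores. -/

open MeasureTheory ProbabilityTheory

/-- The AUC of a score whose class-conditional laws (given label 0 and label 1) are `μ₀` and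
`μ₁`: `AUC = μ*[S₁ > S₀] + ½·μ*[S₁ = S₀]` where `S₀, S₁` are independent with laws `μ₀, μ₁`. -/
noncomputable def AUC (μ₀ μ₁ : MeasureTheory.Measure ℝ) : ℝ :=
  ((μ₁.prod μ₀) {p : ℝ × ℝ | p.1 > p.2}).toReal
    + (1 / 2) * ((μ₁.prod μ₀) {p : ℝ × ℝ | p.1 = p.2}).toReal

open Set
open scoped ENNReal

section JointLaw

variable {Ω α : Type*} [MeasurableSpace Ω] [MeasurableSpace α]

theorem restrict_eq_smul_cond (μ : Measure Ω) {s : Set Ω} (h0 : μ s ≠ 0)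
    (htop : μ s ≠ ∞) : μ.restrict s = μ s • μ[|s] := by
  rw [ProbabilityTheory.cond, smul_smul, ENNReal.mul_inv_cancel h0 htop, one_smul]

theorem map_restrict_eq_smul_of_map_cond_eq {R R' : Measure Ω} {A : Set Ω} {f : Ω → α}
    (h0 : R' A ≠ 0) (htop : R' A ≠ ∞) (h : (R[|A]).map f = (R'[|A]).map f) :
    (R'.restrict A).map f = (R' A / R A) • (R.restrict A).map f := by
  rw [restrict_eq_smul_cond R' h0 htop, Measure.map_smul, ← h, ProbabilityTheory.cond,
    Measure.map_smul, smul_smul, div_eq_mul_inv]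

theorem map_fst_restrict_snd_eq_apply [MeasurableSingletonClass α] (R : Measure (Ω × α)) (y : α)
    {M : Set Ω} (hM : MeasurableSet M) :
    (R.restrict {ω | ω.2 = y}).map Prod.fst M = R (M ×ˢ {y}) := by
  rw [Measure.map_apply measurable_fst hM,
    Measure.restrict_apply (measurable_fst hM), Set.prod_eq]
  rfl

theorem map_fst_eq_add_restrict_snd (R : Measure (Ω × Bool)) :
    R.map Prod.fst = (R.restrict {ω | ω.2 = true}).map Prod.fst
      + (R.restrict {ω | ω.2 = false}).map Prod.fst := by
  have hA : MeasurableSet {ω : Ω × Bool | ω.2 = true} :=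
    measurable_snd (measurableSet_singleton true)
  have hcompl : {ω : Ω × Bool | ω.2 = true}ᶜ = {ω | ω.2 = false} := by ext; simp
  rw [← Measure.map_add _ _ measurable_fst, ← hcompl, Measure.restrict_add_restrict_compl hA]

theorem measure_snd_eq_ne_zero {R : Measure (Ω × Bool)} [IsProbabilityMeasure R]
    (h0 : 0 < R {ω | ω.2 = true}) (h1 : R {ω | ω.2 = true} < 1) (y : Bool) :
    R {ω | ω.2 = y} ≠ 0 := by
  cases y
  · have hA : MeasurableSet {ω : Ω × Bool | ω.2 = true} :=
      measurable_snd (measurableSet_singleton true)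
    have hcompl : {ω : Ω × Bool | ω.2 = false} = {ω | ω.2 = true}ᶜ := by ext; simp
    rw [hcompl, prob_compl_eq_one_sub hA]
    exact (tsub_pos_of_lt h1).ne'
  · exact h0.ne'

end JointLaw

theorem AUC_map_of_strictMonoOn {μ₀ μ₁ : Measure ℝ} [SFinite μ₀] [SFinite μ₁] {ψ : ℝ → ℝ}
    {S : Set ℝ} (hψm : Measurable ψ) (hψ : StrictMonoOn ψ S)
    (h₀ : ∀ᵐ s ∂μ₀, s ∈ S) (h₁ : ∀ᵐ s ∂μ₁, s ∈ S) :
    AUC (μ₀.map ψ) (μ₁.map ψ) = AUC μ₀ μ₁ := by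
  have hlt :
      Prod.map ψ ψ ⁻¹' {p : ℝ × ℝ | p.1 > p.2} ∩ S ×ˢ S = {p | p.1 > p.2} ∩ S ×ˢ S := by
    ext ⟨a, b⟩
    exact and_congr_left fun ⟨ha, hb⟩ => hψ.lt_iff_lt hb ha
  have heq :
      Prod.map ψ ψ ⁻¹' {p : ℝ × ℝ | p.1 = p.2} ∩ S ×ˢ S = {p | p.1 = p.2} ∩ S ×ˢ S := by
    ext ⟨a, b⟩
    exact and_congr_left fun ⟨ha, hb⟩ => hψ.injOn.eq_iff ha hb
  have hmlt : MeasurableSet {p : ℝ × ℝ | p.1 > p.2} :=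
    measurableSet_lt measurable_snd measurable_fst
  have hmeq : MeasurableSet {p : ℝ × ℝ | p.1 = p.2} :=
    measurableSet_eq_fun measurable_fst measurable_snd
  have hψ2 := hψm.prodMap hψm
  rw [← Measure.restrict_eq_self_of_ae_mem h₀, ← Measure.restrict_eq_self_of_ae_mem h₁]
  simp only [AUC, Measure.map_prod_map _ _ hψm hψm, Measure.prod_restrict,
    Measure.map_apply hψ2 hmlt, Measure.map_apply hψ2 hmeq, Measure.restrict_apply hmlt,
    Measure.restrict_apply hmeq, Measure.restrict_apply (hψ2 hmlt),
    Measure.restrict_apply (hψ2 hmeq), hlt, heq]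

section Posterior

variable {α : Type*} [MeasurableSpace α]

theorem norm_le_one_of_mem_Icc {s : ℝ} (hs : s ∈ Icc (0 : ℝ) 1) : ‖s‖ ≤ 1 := by
  rw [Real.norm_eq_abs, abs_le]; exact ⟨by linarith [hs.1], hs.2⟩

theorem integrable_of_ae_mem_Icc {μ : Measure α} [IsFiniteMeasure μ] {f : α → ℝ}
    (hf : AEStronglyMeasurable f μ) (h : ∀ᵐ x ∂μ, f x ∈ Icc (0 : ℝ) 1) : Integrable f μ :=
  Integrable.of_bound hf 1 (h.mono fun _ => norm_le_one_of_mem_Icc)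

theorem ae_mem_Icc_of_setIntegral_eq_measureReal {μ κ : Measure α} [IsFiniteMeasure μ]
    (hκμ : κ ≤ μ) {η : α → ℝ} (hη : Measurable η)
    (h : ∀ M, MeasurableSet M → ∫ x in M, η x ∂μ = κ.real M) :
    ∀ᵐ x ∂μ, η x ∈ Icc (0 : ℝ) 1 := by
  have hcover : ⋃ n : ℕ, {x | |η x| ≤ n} = univ :=
    eq_univ_of_forall fun x => mem_iUnion.2 (exists_nat_ge |η x|)
  rw [← Measure.restrict_univ (μ := μ), ← hcover, ae_restrict_iUnion_iff]
  intro n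
  have ht : MeasurableSet {x | |η x| ≤ n} := measurableSet_le hη.abs measurable_const
  have hint : IntegrableOn η {x | |η x| ≤ n} μ :=
    Integrable.of_bound hη.aestronglyMeasurable n (ae_restrict_of_forall_mem ht fun x hx => hx)
  have h0 : 0 ≤ᵐ[μ.restrict {x | |η x| ≤ n}] η :=
    ae_nonneg_restrict_of_forall_setIntegral_nonneg_inter hint fun s hs _ => by
      rw [h _ (hs.inter ht)]; exact measureReal_nonneg
  have h1 : 0 ≤ᵐ[μ.restrict {x | |η x| ≤ n}] fun x => 1 - η x :=
    ae_nonneg_restrict_of_forall_setIntegral_nonneg_inter ((integrableOn_const).sub hint)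
      fun s hs _ => by
        rw [integral_sub (integrable_const 1) (hint.mono_set inter_subset_right),
          setIntegral_const, h _ (hs.inter ht), smul_eq_mul, mul_one, sub_nonneg]
        exact ENNReal.toReal_mono (measure_ne_top _ _) (hκμ _)
  filter_upwards [h0, h1] with x hx0 hx1
  exact ⟨hx0, by simpa using hx1⟩

theorem withDensity_ofReal_eq_of_setIntegral_eq {μ κ : Measure α} [IsFiniteMeasure κ]
    {g : α → ℝ} (hg : Integrable g μ) (hg0 : 0 ≤ᵐ[μ] g)
    (h : ∀ M, MeasurableSet M → ∫ x in M, g x ∂μ = κ.real M) :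
    μ.withDensity (fun x => ENNReal.ofReal (g x)) = κ := by
  ext M hM
  rw [withDensity_apply _ hM,
    ← ofReal_integral_eq_lintegral_ofReal hg.integrableOn (ae_restrict_of_ae hg0),
    h M hM, ofReal_measureReal]

end Posterior

/-- Bayes' rule: the posterior probability `c₁ s / (c₁ s + c₀ (1 - s))` of the positive class after
the class weights are multiplied by `c₁` and `c₀`, in terms of the posterior `s` before. -/
noncomputable def posteriorReweight (c₁ c₀ s : ℝ) : ℝ := c₁ * s / (c₁ * s + c₀ * (1 - s))

theorem mul_add_mul_one_sub_pos {c₁ c₀ s : ℝ} (h₁ : 0 < c₁) (h₀ : 0 < c₀)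
    (hs : s ∈ Icc (0 : ℝ) 1) : 0 < c₁ * s + c₀ * (1 - s) := by
  rcases hs.1.eq_or_lt with rfl | hs0
  · simpa using h₀
  · nlinarith [hs.2]

theorem measurable_posteriorReweight (c₁ c₀ : ℝ) : Measurable (posteriorReweight c₁ c₀) := by
  unfold posteriorReweight; fun_prop

theorem strictMonoOn_posteriorReweight {c₁ c₀ : ℝ} (h₁ : 0 < c₁) (h₀ : 0 < c₀) :
    StrictMonoOn (posteriorReweight c₁ c₀) (Icc 0 1) := by
  intro s hs t ht hst
  rw [posteriorReweight, posteriorReweight,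
    div_lt_div_iff₀ (mul_add_mul_one_sub_pos h₁ h₀ hs) (mul_add_mul_one_sub_pos h₁ h₀ ht)]
  nlinarith [mul_pos (mul_pos h₁ h₀) (sub_pos.2 hst)]

theorem add_absolutelyContinuous_smul_add_smul {α : Type*} [MeasurableSpace α]
    {μ₀ μ₁ : Measure α} {c₀ c₁ : ℝ≥0∞} (hc₀ : c₀ ≠ 0) (hc₁ : c₁ ≠ 0) :
    μ₁ + μ₀ ≪ c₁ • μ₁ + c₀ • μ₀ :=
  ((Measure.absolutelyContinuous_smul hc₁).add_right _).add_left
    ((Measure.absolutelyContinuous_smul hc₀).add_right' _)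

section Reweight

variable {α : Type*} [MeasurableSpace α] {κ₀ κ₁ : Measure α} [IsFiniteMeasure κ₀]
  [IsFiniteMeasure κ₁] {c₀ c₁ : ℝ≥0∞} {η : α → ℝ}

theorem setIntegral_reweight_eq (hc₀' : c₀ ≠ ∞) (hc₁' : c₁ ≠ ∞) (hη : Integrable η (κ₁ + κ₀))
    (hpost : ∀ M, MeasurableSet M → ∫ x in M, η x ∂(κ₁ + κ₀) = κ₁.real M)
    {M : Set α} (hM : MeasurableSet M) :
    ∫ x in M, (c₁.toReal * η x + c₀.toReal * (1 - η x)) ∂(κ₁ + κ₀)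
      = (c₁ • κ₁ + c₀ • κ₀).real M := by
  have := Measure.smul_finite κ₀ hc₀'
  have := Measure.smul_finite κ₁ hc₁'
  have hη' := hη.integrableOn (s := M)
  have h1η : IntegrableOn (fun x => 1 - η x) M (κ₁ + κ₀) := (integrable_const 1).sub hη'
  rw [integral_add (hη'.const_mul _) (h1η.const_mul _),
    integral_const_mul, integral_const_mul, integral_sub (integrable_const 1) hη',
    setIntegral_const, hpost M hM, smul_eq_mul, mul_one, measureReal_add_apply,
    measureReal_add_apply, measureReal_ennreal_smul_apply, measureReal_ennreal_smul_apply]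
  ring

theorem ae_eq_posteriorReweight (hc₀ : c₀ ≠ 0) (hc₀' : c₀ ≠ ∞) (hc₁ : c₁ ≠ 0) (hc₁' : c₁ ≠ ∞)
    {η' : α → ℝ} (hη : Measurable η) (hη' : Measurable η')
    (hpost : ∀ M, MeasurableSet M → ∫ x in M, η x ∂(κ₁ + κ₀) = κ₁.real M)
    (hpost' : ∀ M, MeasurableSet M →
      ∫ x in M, η' x ∂(c₁ • κ₁ + c₀ • κ₀) = (c₁ • κ₁).real M) :
    η' =ᵐ[κ₁ + κ₀] fun x => posteriorReweight c₁.toReal c₀.toReal (η x) := by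
  have ha : 0 < c₁.toReal := ENNReal.toReal_pos hc₁ hc₁'
  have hb : 0 < c₀.toReal := ENNReal.toReal_pos hc₀ hc₀'
  have := Measure.smul_finite κ₀ hc₀'
  have := Measure.smul_finite κ₁ hc₁'
  have hIcc := ae_mem_Icc_of_setIntegral_eq_measureReal (Measure.le_add_right le_rfl) hη hpost
  have hIcc' : ∀ᵐ x ∂(κ₁ + κ₀), η' x ∈ Icc (0 : ℝ) 1 :=
    (add_absolutelyContinuous_smul_add_smul hc₀ hc₁).ae_le
      (ae_mem_Icc_of_setIntegral_eq_measureReal (Measure.le_add_right le_rfl) hη' hpost')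
  have hint := integrable_of_ae_mem_Icc hη.aestronglyMeasurable hIcc
  set g := fun x => c₁.toReal * η x + c₀.toReal * (1 - η x)
  have hg : Integrable g (κ₁ + κ₀) :=
    (hint.const_mul _).add (((integrable_const 1).sub hint).const_mul _)
  have hg_pos : ∀ᵐ x ∂(κ₁ + κ₀), 0 < g x := hIcc.mono fun x => mul_add_mul_one_sub_pos ha hb
  have hdens : (κ₁ + κ₀).withDensity (fun x => ENNReal.ofReal (g x)) = c₁ • κ₁ + c₀ • κ₀ :=
    withDensity_ofReal_eq_of_setIntegral_eq hg (hg_pos.mono fun x hx => hx.le)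
      fun M hM => setIntegral_reweight_eq hc₀' hc₁' hint hpost hM
  have hgη' : Integrable (fun x => g x * η' x) (κ₁ + κ₀) :=
    hg.mul_bdd hη'.aestronglyMeasurable (hIcc'.mono fun _ => norm_le_one_of_mem_Icc)
  have hkey : (fun x => g x * η' x) =ᵐ[κ₁ + κ₀] fun x => c₁.toReal * η x := by
    refine ae_eq_of_forall_setIntegral_eq_of_sigmaFinite (fun _ _ _ => hgη'.integrableOn)
      (fun _ _ _ => (hint.const_mul _).integrableOn) fun M hM _ => ?_
    calc ∫ x in M, g x * η' x ∂(κ₁ + κ₀)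
        = ∫ x in M, η' x ∂(c₁ • κ₁ + c₀ • κ₀) := by
          rw [← hdens, setIntegral_withDensity_eq_setIntegral_toReal_smul
            (by fun_prop) (ae_of_all _ fun _ => ENNReal.ofReal_lt_top) _ hM]
          refine setIntegral_congr_ae hM (hg_pos.mono fun x hx _ => ?_)
          rw [ENNReal.toReal_ofReal hx.le, smul_eq_mul]
      _ = ∫ x in M, c₁.toReal * η x ∂(κ₁ + κ₀) := by
          rw [hpost' M hM, integral_const_mul, hpost M hM, measureReal_ennreal_smul_apply]
  filter_upwards [hg_pos, hkey] with x hx hkx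
  rw [posteriorReweight, eq_div_iff hx.ne', ← hkx, mul_comm]

end Reweight

section LabelShift

variable {Ω : Type*} [MeasurableSpace Ω] {P Q : Measure (Ω × Bool)} {ηP ηQ : Ω → ℝ}

theorem setIntegral_eq_measureReal_map_fst_restrict (hpost : ∀ M : Set Ω, MeasurableSet M →
      ∫ x in M, ηP x ∂(P.map Prod.fst) = (P (M ×ˢ {true})).toReal)
    {M : Set Ω} (hM : MeasurableSet M) :
    ∫ x in M, ηP x ∂(P.map Prod.fst) = ((P.restrict {ω | ω.2 = true}).map Prod.fst).real M := by
  rw [hpost M hM, measureReal_def, map_fst_restrict_snd_eq_apply P true hM]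

theorem ae_mem_Icc_of_setIntegral_eq_measure_prod_true [IsFiniteMeasure P] (hηP : Measurable ηP)
    (hpost : ∀ M : Set Ω, MeasurableSet M →
      ∫ x in M, ηP x ∂(P.map Prod.fst) = (P (M ×ˢ {true})).toReal) :
    ∀ᵐ x ∂(P.map Prod.fst), ηP x ∈ Icc (0 : ℝ) 1 :=
  ae_mem_Icc_of_setIntegral_eq_measureReal
    ((map_fst_eq_add_restrict_snd P).symm ▸ Measure.le_add_right le_rfl) hηP
    fun _ => setIntegral_eq_measureReal_map_fst_restrict hpost

theorem ae_eq_posteriorReweight_of_labelShift [IsFiniteMeasure P] [IsFiniteMeasure Q]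
    (hP : ∀ y, P {ω | ω.2 = y} ≠ 0) (hQ : ∀ y, Q {ω | ω.2 = y} ≠ 0)
    (hshift : ∀ y : Bool, (P[|{ω | ω.2 = y}]).map Prod.fst = (Q[|{ω | ω.2 = y}]).map Prod.fst)
    (hηP : Measurable ηP) (hηQ : Measurable ηQ)
    (hpostP : ∀ M : Set Ω, MeasurableSet M →
      ∫ x in M, ηP x ∂(P.map Prod.fst) = (P (M ×ˢ {true})).toReal)
    (hpostQ : ∀ M : Set Ω, MeasurableSet M →
      ∫ x in M, ηQ x ∂(Q.map Prod.fst) = (Q (M ×ˢ {true})).toReal) :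
    ηQ =ᵐ[P.map Prod.fst] posteriorReweight
      (Q {ω | ω.2 = true} / P {ω | ω.2 = true}).toReal
      (Q {ω | ω.2 = false} / P {ω | ω.2 = false}).toReal ∘ ηP := by
  have hQκ : ∀ y, (Q.restrict {ω | ω.2 = y}).map Prod.fst
      = (Q {ω | ω.2 = y} / P {ω | ω.2 = y}) • (P.restrict {ω | ω.2 = y}).map Prod.fst :=
    fun y => map_restrict_eq_smul_of_map_cond_eq (hQ y) (measure_ne_top _ _) (hshift y)
  have hpostP' := fun M => setIntegral_eq_measureReal_map_fst_restrict hpostP (M := M)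
  rw [map_fst_eq_add_restrict_snd P] at hpostP' ⊢
  refine ae_eq_posteriorReweight (ENNReal.div_ne_zero.2 ⟨hQ false, measure_ne_top _ _⟩)
    (ENNReal.div_ne_top (measure_ne_top _ _) (hP false))
    (ENNReal.div_ne_zero.2 ⟨hQ true, measure_ne_top _ _⟩)
    (ENNReal.div_ne_top (measure_ne_top _ _) (hP true)) hηP hηQ hpostP' fun M hM => ?_
  rw [← hQκ, ← hQκ, ← map_fst_eq_add_restrict_snd Q,
    setIntegral_eq_measureReal_map_fst_restrict hpostQ hM]

theorem map_cond_comp_fst_eq_map_of_ae_eq_comp {A : Set (Ω × Bool)} {ψ : ℝ → ℝ}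
    (hshift : (P[|A]).map Prod.fst = (Q[|A]).map Prod.fst) (hηP : Measurable ηP)
    (hηQ : Measurable ηQ) (hψ : Measurable ψ) (hlink : ηQ =ᵐ[P.map Prod.fst] ψ ∘ ηP) :
    (Q[|A]).map (fun ω => ηQ ω.1) = ((P[|A]).map (fun ω => ηP ω.1)).map ψ :=
  calc (Q[|A]).map (fun ω => ηQ ω.1) = ((Q[|A]).map Prod.fst).map ηQ :=
        (Measure.map_map hηQ measurable_fst).symm
    _ = ((P[|A]).map Prod.fst).map (ψ ∘ ηP) := by
        rw [← hshift]
        exact Measure.map_congr ((cond_absolutelyContinuous.map measurable_fst).ae_eq hlink)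
    _ = ((P[|A]).map (fun ω => ηP ω.1)).map ψ := by
        rw [← Measure.map_map hψ hηP, Measure.map_map hηP measurable_fst]
        rfl

end LabelShift

/-- Under label shift between a source distribution `P` and a target distribution `Q` of a
feature-label pair (labels in `{0,1}`, here `Bool`), the AUC of the source posterior
probability `η_P(X)` computed under `P` equals the AUC of the target posterior probability
`η_Q(X)` computed under `Q`. -/
theorem auc_labelShift_invariant
    {𝒳 : Type*} [MeasurableSpace 𝒳]
    (P Q : Measure (𝒳 × Bool)) [IsProbabilityMeasure P] [IsProbabilityMeasure Q]
    (hp0 : 0 < P {ω : 𝒳 × Bool | ω.2 = true}) (hp1 : P {ω : 𝒳 × Bool | ω.2 = true} < 1)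
    (hq0 : 0 < Q {ω : 𝒳 × Bool | ω.2 = true}) (hq1 : Q {ω : 𝒳 × Bool | ω.2 = true} < 1)
    -- label shift: the class-conditional feature distributions agree under `P` and `Q`
    (hshift : ∀ y : Bool,
      (P[|{ω : 𝒳 × Bool | ω.2 = y}]).map Prod.fst = (Q[|{ω : 𝒳 × Bool | ω.2 = y}]).map Prod.fst)
    (ηP ηQ : 𝒳 → ℝ) (hηP : Measurable ηP) (hηQ : Measurable ηQ)
    -- `ηP` is a version of `P[Y = 1 | X]`
    (hηPver : ∀ M : Set 𝒳, MeasurableSet M →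
      ∫ x in M, ηP x ∂(P.map Prod.fst) = (P (M ×ˢ {true})).toReal)
    -- `ηQ` is a version of `Q[Y = 1 | X]`
    (hηQver : ∀ M : Set 𝒳, MeasurableSet M →
      ∫ x in M, ηQ x ∂(Q.map Prod.fst) = (Q (M ×ˢ {true})).toReal) :
    AUC ((P[|{ω : 𝒳 × Bool | ω.2 = false}]).map (fun ω => ηP ω.1))
        ((P[|{ω : 𝒳 × Bool | ω.2 = true}]).map (fun ω => ηP ω.1))
      = AUC ((Q[|{ω : 𝒳 × Bool | ω.2 = false}]).map (fun ω => ηQ ω.1))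
            ((Q[|{ω : 𝒳 × Bool | ω.2 = true}]).map (fun ω => ηQ ω.1)) := by
  have hP := measure_snd_eq_ne_zero hp0 hp1
  have hQ := measure_snd_eq_ne_zero hq0 hq1
  have hc : ∀ y, 0 < (Q {ω | ω.2 = y} / P {ω | ω.2 = y}).toReal := fun y =>
    ENNReal.toReal_pos (ENNReal.div_ne_zero.2 ⟨hQ y, measure_ne_top _ _⟩)
      (ENNReal.div_ne_top (measure_ne_top _ _) (hP y))
  have hψ := measurable_posteriorReweight
    (Q {ω | ω.2 = true} / P {ω | ω.2 = true}).toReal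
    (Q {ω | ω.2 = false} / P {ω | ω.2 = false}).toReal
  have hlink := ae_eq_posteriorReweight_of_labelShift hP hQ hshift hηP hηQ hηPver hηQver
  have hIcc := ae_mem_Icc_of_setIntegral_eq_measure_prod_true hηP hηPver
  have hS : ∀ y, ∀ᵐ s ∂(P[|{ω | ω.2 = y}]).map (fun ω => ηP ω.1), s ∈ Icc (0 : ℝ) 1 :=
    fun y => (ae_map_iff (hηP.comp measurable_fst).aemeasurable measurableSet_Icc).2
      (cond_absolutelyContinuous.ae_le (ae_of_ae_map measurable_fst.aemeasurable hIcc))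
  rw [map_cond_comp_fst_eq_map_of_ae_eq_comp (hshift false) hηP hηQ hψ hlink,
    map_cond_comp_fst_eq_map_of_ae_eq_comp (hshift true) hηP hηQ hψ hlink]
  exact (AUC_map_of_strictMonoOn hψ (strictMonoOn_posteriorReweight (hc true) (hc false))
    (hS false) (hS true)).symm
end

section
/- Let X be a random feature with values in a measurable space 𝒳 and Y a label with values in {0,1}, with source distribution P and target distribution Q of (X,Y), p = P[Y=1] ∈ (0,1) and q = Q[Y=1] ∈ (0,1). Suppose P and Q are related through label shift, i.e., P[X ∈ M | Y = y] = Q[X ∈ M | Y = y] for all measurable M ⊆ 𝒳 and y ∈ {0,1}, and let η_P(X) be a version of P[Y=1 | X] with 0 < η_P(X) < 1 P-almost surely. Then Q-almost surely, Q[Y=1 | X] = ((q/p)·η_P(X)) / ((q/p)·η_P(X) + ((1−q)/(1−p))·(1−η_P(X))). -/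
/-!
Label shift says that for each label `y` the joint law `M ↦ Q (M × {y})` is the one under `P`
rescaled by `Q[Y = y] / P[Y = y]`. As `P (M × {1})` and `P (M × {0})` have densities `η_P` and
`1 - η_P` with respect to the feature marginal `P_X`, the marginal `Q_X` has density
`w = (q/p) η_P + ((1-q)/(1-p)) (1 - η_P)` with respect to `P_X`, and hence `Q (· × {1})` has density
`(q/p) η_P / w` with respect to `Q_X`. A version of `Q[Y = 1 | X]` is determined `Q_X`-a.e. by its
set integrals, so it equals this density.
-/

open MeasureTheory ProbabilityTheory
open scoped ENNReal

namespace MeasureTheory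

variable {α : Type*} [MeasurableSpace α] {μ : Measure α}

-- `f` need not be integrable, but it is on each of the sets `{|f| ≤ n}`, which exhaust `α`.
theorem ae_eq_of_forall_setIntegral_eq_of_integrable_right [IsFiniteMeasure μ] {f g : α → ℝ}
    (hf : Measurable f) (hg : Integrable g μ)
    (hfg : ∀ s, MeasurableSet s → ∫ x in s, f x ∂μ = ∫ x in s, g x ∂μ) : f =ᵐ[μ] g := by
  set t : ℕ → Set α := fun n => {x | |f x| ≤ n}
  have ht : ∀ n, MeasurableSet (t n) := fun n => measurableSet_le hf.abs measurable_const
  have ht_univ : ⋃ n, t n = Set.univ :=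
    Set.eq_univ_of_forall fun x => Set.mem_iUnion.mpr (exists_nat_ge |f x|)
  rw [Filter.EventuallyEq, ← Measure.restrict_univ (μ := μ), ← ht_univ, ae_restrict_iUnion_iff]
  intro n
  have hf_int : Integrable f (μ.restrict (t n)) :=
    Integrable.of_bound (C := n) hf.aestronglyMeasurable.restrict <|
      (ae_restrict_mem (ht n)).mono fun x hx => hx
  refine hf_int.ae_eq_of_forall_setIntegral_eq _ _ hg.restrict fun s hs _ => ?_
  rw [Measure.restrict_restrict hs, hfg _ (hs.inter (ht n))]

theorem ae_eq_toReal_of_forall_setIntegral_eq_of_eq_withDensity [IsFiniteMeasure μ]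
    {ρ : Measure α} [IsFiniteMeasure ρ] {f : α → ℝ} {g : α → ℝ≥0∞}
    (hf : Measurable f) (hg : Measurable g) (hρ : ρ = μ.withDensity g)
    (hfρ : ∀ s, MeasurableSet s → ∫ x in s, f x ∂μ = (ρ s).toReal) :
    f =ᵐ[μ] fun x => (g x).toReal := by
  have hg_fin : ∫⁻ x, g x ∂μ ≠ ∞ := by
    rw [← setLIntegral_univ, ← withDensity_apply _ MeasurableSet.univ, ← hρ]
    exact measure_ne_top ρ _
  refine ae_eq_of_forall_setIntegral_eq_of_integrable_right hf
    (integrable_toReal_of_lintegral_ne_top hg.aemeasurable hg_fin) fun s hs => ?_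
  rw [hfρ s hs, hρ, withDensity_apply _ hs,
    integral_toReal hg.aemeasurable.restrict (ae_restrict_of_ae (ae_lt_top hg hg_fin))]

theorem eq_withDensity_ofReal_of_forall_setIntegral_eq {ρ : Measure α} [IsFiniteMeasure ρ]
    {f : α → ℝ} (hf : Integrable f μ) (hf_nonneg : 0 ≤ᵐ[μ] f)
    (hfρ : ∀ s, MeasurableSet s → ∫ x in s, f x ∂μ = (ρ s).toReal) :
    ρ = μ.withDensity fun x => ENNReal.ofReal (f x) := by
  ext s hs
  rw [withDensity_apply _ hs, ← ofReal_integral_eq_lintegral_ofReal hf.integrableOn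
    (ae_restrict_of_ae hf_nonneg), hfρ s hs, ENNReal.ofReal_toReal (measure_ne_top ρ s)]

theorem withDensity_eq_withDensity_withDensity_div {f w : α → ℝ≥0∞} (hf : Measurable f)
    (hw : Measurable w) (hfw : f ≤ᵐ[μ] w) (hw_top : ∀ᵐ x ∂μ, w x ≠ ∞) :
    μ.withDensity f = (μ.withDensity w).withDensity (f / w) := by
  rw [← withDensity_mul μ hw (hf.div hw)]
  refine withDensity_congr_ae ?_
  filter_upwards [hfw, hw_top] with x hfx hwx
  exact (ENNReal.mul_div_cancel' (fun h => nonpos_iff_eq_zero.mp (h ▸ hfx))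
    (fun h => absurd h hwx)).symm

end MeasureTheory

namespace ProbabilityTheory

variable {Ω β : Type*} [MeasurableSpace Ω] [MeasurableSpace β]

theorem map_restrict_eq_smul_of_map_cond_eq {μ ν : Measure Ω} [IsFiniteMeasure ν] {s : Set Ω}
    {f : Ω → β} (h : (μ[|s]).map f = (ν[|s]).map f) :
    (ν.restrict s).map f = (ν s * (μ s)⁻¹) • (μ.restrict s).map f := by
  by_cases hν : ν s = 0
  · simp [Measure.restrict_eq_zero.mpr hν, hν]
  calc (ν.restrict s).map f = ν s • (ν[|s]).map f := by
        rw [cond, Measure.map_smul, smul_smul, ENNReal.mul_inv_cancel hν (measure_ne_top ν s),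
          one_smul]
    _ = (ν s * (μ s)⁻¹) • (μ.restrict s).map f := by
        rw [← h, cond, Measure.map_smul, smul_smul]

end ProbabilityTheory

theorem ENNReal.toReal_mul_ofReal_div_add_mul_ofReal {a b : ℝ≥0∞} (ha : a ≠ ∞) (hb : b ≠ ∞)
    {s t : ℝ} (hs : 0 ≤ s) (ht : 0 ≤ t) :
    (a * ENNReal.ofReal s / (a * ENNReal.ofReal s + b * ENNReal.ofReal t)).toReal
      = a.toReal * s / (a.toReal * s + b.toReal * t) := by
  rw [ENNReal.toReal_div, ENNReal.toReal_add (by finiteness) (by finiteness), ENNReal.toReal_mul,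
    ENNReal.toReal_mul, ENNReal.toReal_ofReal hs, ENNReal.toReal_ofReal ht]

section LabelShift

variable {𝒳 : Type*} [MeasurableSpace 𝒳]

noncomputable def classMeasure (μ : Measure (𝒳 × Bool)) (y : Bool) : Measure 𝒳 :=
  (μ.restrict {ω | ω.2 = y}).map Prod.fst

instance (μ : Measure (𝒳 × Bool)) [IsFiniteMeasure μ] (y : Bool) :
    IsFiniteMeasure (classMeasure μ y) := by
  unfold classMeasure
  infer_instance

theorem classMeasure_apply (μ : Measure (𝒳 × Bool)) (y : Bool) {M : Set 𝒳}
    (hM : MeasurableSet M) : classMeasure μ y M = μ (M ×ˢ {y}) := by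
  rw [classMeasure, Measure.map_apply measurable_fst hM, Measure.restrict_apply (measurable_fst hM)]
  congr 1

theorem setOf_snd_eq_false {α : Type*} :
    {ω : α × Bool | ω.2 = false} = {ω | ω.2 = true}ᶜ := by
  ext ω
  simp

theorem measurableSet_setOf_snd_eq (y : Bool) : MeasurableSet {ω : 𝒳 × Bool | ω.2 = y} :=
  measurable_snd (measurableSet_singleton y)

theorem map_fst_eq_classMeasure_add (μ : Measure (𝒳 × Bool)) :
    μ.map Prod.fst = classMeasure μ true + classMeasure μ false := by
  rw [classMeasure, classMeasure, setOf_snd_eq_false, ← Measure.map_add _ _ measurable_fst,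
    Measure.restrict_add_restrict_compl (measurableSet_setOf_snd_eq true)]

theorem toReal_measure_snd_eq_false (μ : Measure (𝒳 × Bool)) [IsProbabilityMeasure μ] :
    (μ {ω | ω.2 = false}).toReal = 1 - (μ {ω | ω.2 = true}).toReal := by
  rw [setOf_snd_eq_false]
  exact probReal_compl_eq_one_sub (measurableSet_setOf_snd_eq true)

theorem classMeasure_true_eq_withDensity (μ : Measure (𝒳 × Bool)) [IsFiniteMeasure μ]
    {η : 𝒳 → ℝ} (hη : Measurable η) (hη01 : ∀ᵐ x ∂μ.map Prod.fst, η x ∈ Set.Icc 0 1)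
    (hver : ∀ M, MeasurableSet M →
      ∫ x in M, η x ∂(μ.map Prod.fst) = (μ (M ×ˢ {true})).toReal) :
    classMeasure μ true = (μ.map Prod.fst).withDensity fun x => ENNReal.ofReal (η x) :=
  eq_withDensity_ofReal_of_forall_setIntegral_eq (Integrable.of_mem_Icc 0 1 hη.aemeasurable hη01)
    (hη01.mono fun _ hx => hx.1) fun M hM => by rw [hver M hM, classMeasure_apply μ true hM]

theorem classMeasure_false_eq_withDensity (μ : Measure (𝒳 × Bool)) [IsFiniteMeasure μ]
    {η : 𝒳 → ℝ} (hη : Measurable η) (hη01 : ∀ᵐ x ∂μ.map Prod.fst, η x ∈ Set.Icc 0 1)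
    (hver : ∀ M, MeasurableSet M →
      ∫ x in M, η x ∂(μ.map Prod.fst) = (μ (M ×ˢ {true})).toReal) :
    classMeasure μ false = (μ.map Prod.fst).withDensity fun x => ENNReal.ofReal (1 - η x) := by
  have hη_int := Integrable.of_mem_Icc 0 1 hη.aemeasurable hη01
  refine eq_withDensity_ofReal_of_forall_setIntegral_eq ((integrable_const 1).sub hη_int)
    (hη01.mono fun _ hx => sub_nonneg.mpr hx.2) fun M hM => ?_
  have hsum : ((μ.map Prod.fst) M).toReal
      = (classMeasure μ true M).toReal + (classMeasure μ false M).toReal := by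
    rw [map_fst_eq_classMeasure_add, Measure.add_apply,
      ENNReal.toReal_add (measure_ne_top _ _) (measure_ne_top _ _)]
  rw [integral_sub (integrable_const 1).integrableOn hη_int.integrableOn, setIntegral_const,
    smul_eq_mul, mul_one, hver M hM, ← classMeasure_apply μ true hM, Measure.real, hsum]
  ring

theorem map_fst_eq_withDensity_of_classMeasure_eq_smul {μ ν : Measure (𝒳 × Bool)}
    [IsFiniteMeasure μ] {η : 𝒳 → ℝ} (hη : Measurable η)
    (hη01 : ∀ᵐ x ∂μ.map Prod.fst, η x ∈ Set.Icc 0 1)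
    (hver : ∀ M, MeasurableSet M →
      ∫ x in M, η x ∂(μ.map Prod.fst) = (μ (M ×ˢ {true})).toReal)
    {a b : ℝ≥0∞} (ha : a ≠ ∞) (hb : b ≠ ∞)
    (hνa : classMeasure ν true = a • classMeasure μ true)
    (hνb : classMeasure ν false = b • classMeasure μ false) :
    ν.map Prod.fst = (μ.map Prod.fst).withDensity
      fun x => a * ENNReal.ofReal (η x) + b * ENNReal.ofReal (1 - η x) := by
  rw [map_fst_eq_classMeasure_add, hνa, hνb, classMeasure_true_eq_withDensity μ hη hη01 hver,
    classMeasure_false_eq_withDensity μ hη hη01 hver, ← withDensity_smul' _ _ ha,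
    ← withDensity_smul' _ _ hb, ← withDensity_add_left (by fun_prop)]
  rfl

theorem classMeasure_true_eq_withDensity_of_classMeasure_eq_smul {μ ν : Measure (𝒳 × Bool)}
    [IsFiniteMeasure μ] {η : 𝒳 → ℝ} (hη : Measurable η)
    (hη01 : ∀ᵐ x ∂μ.map Prod.fst, η x ∈ Set.Icc 0 1)
    (hver : ∀ M, MeasurableSet M →
      ∫ x in M, η x ∂(μ.map Prod.fst) = (μ (M ×ˢ {true})).toReal)
    {a b : ℝ≥0∞} (ha : a ≠ ∞) (hb : b ≠ ∞)
    (hνa : classMeasure ν true = a • classMeasure μ true)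
    (hνb : classMeasure ν false = b • classMeasure μ false) :
    classMeasure ν true = (ν.map Prod.fst).withDensity fun x =>
      a * ENNReal.ofReal (η x) / (a * ENNReal.ofReal (η x) + b * ENNReal.ofReal (1 - η x)) := by
  rw [map_fst_eq_withDensity_of_classMeasure_eq_smul hη hη01 hver ha hb hνa hνb, hνa,
    classMeasure_true_eq_withDensity μ hη hη01 hver, ← withDensity_smul' _ _ ha]
  exact withDensity_eq_withDensity_withDensity_div (by fun_prop) (by fun_prop)
    (ae_of_all _ fun _ => le_self_add) (ae_of_all _ fun _ => by finiteness)

end LabelShift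

theorem posterior_correction_labelShift_general
    {𝒳 : Type*} [MeasurableSpace 𝒳]
    (P Q : Measure (𝒳 × Bool)) [IsProbabilityMeasure P] [IsProbabilityMeasure Q]
    (p q : ℝ)
    (hpdef : (P {ω : 𝒳 × Bool | ω.2 = true}).toReal = p) (hp : p ∈ Set.Ioo (0 : ℝ) 1)
    (hqdef : (Q {ω : 𝒳 × Bool | ω.2 = true}).toReal = q)
    -- label shift: the class-conditional feature distributions agree under `P` and `Q`
    (hshift : ∀ y : Bool,
      (P[|{ω : 𝒳 × Bool | ω.2 = y}]).map Prod.fst = (Q[|{ω : 𝒳 × Bool | ω.2 = y}]).map Prod.fst)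
    (ηP : 𝒳 → ℝ) (hηP : Measurable ηP)
    -- `ηP` is a version of `P[Y = 1 | X]`
    (hηPver : ∀ M : Set 𝒳, MeasurableSet M →
      ∫ x in M, ηP x ∂(P.map Prod.fst) = (P (M ×ˢ {true})).toReal)
    -- `0 < η_P(X) < 1` holds `P`-almost surely
    (hηP01 : ∀ᵐ x ∂(P.map Prod.fst), ηP x ∈ Set.Ioo (0 : ℝ) 1)
    (ηQ : 𝒳 → ℝ) (hηQ : Measurable ηQ)
    -- `ηQ` is a version of `Q[Y = 1 | X]`
    (hηQver : ∀ M : Set 𝒳, MeasurableSet M →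
      ∫ x in M, ηQ x ∂(Q.map Prod.fst) = (Q (M ×ˢ {true})).toReal) :
    ∀ᵐ x ∂(Q.map Prod.fst),
      ηQ x = (q / p * ηP x) / (q / p * ηP x + (1 - q) / (1 - p) * (1 - ηP x)) := by
  obtain ⟨hp0, hp1⟩ := hp
  have hη01 : ∀ᵐ x ∂P.map Prod.fst, ηP x ∈ Set.Icc 0 1 :=
    hηP01.mono fun _ hx => Set.Ioo_subset_Icc_self hx
  have hpf := toReal_measure_snd_eq_false P
  have hqf := toReal_measure_snd_eq_false Q
  set c : Bool → ℝ≥0∞ := fun y => Q {ω | ω.2 = y} * (P {ω | ω.2 = y})⁻¹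
  have hc : ∀ y, c y ≠ ∞ := fun y => ENNReal.mul_ne_top (measure_ne_top _ _) <|
    ENNReal.inv_ne_top.mpr fun h => by
      cases y <;> simp only [h, ENNReal.toReal_zero] at hpdef hpf <;> linarith
  have hQ : ∀ y, classMeasure Q y = c y • classMeasure P y :=
    fun y => map_restrict_eq_smul_of_map_cond_eq (hshift y)
  have hQx := map_fst_eq_withDensity_of_classMeasure_eq_smul hηP hη01 hηPver
    (hc true) (hc false) (hQ true) (hQ false)
  have hηQ_eq := ae_eq_toReal_of_forall_setIntegral_eq_of_eq_withDensity hηQ (by fun_prop)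
    (classMeasure_true_eq_withDensity_of_classMeasure_eq_smul hηP hη01 hηPver
      (hc true) (hc false) (hQ true) (hQ false))
    fun M hM => by rw [hηQver M hM, classMeasure_apply _ _ hM]
  filter_upwards [hηQ_eq, (hQx ▸ withDensity_absolutelyContinuous _ _ : _ ≪ _).ae_le hη01]
    with x hx hx01
  rw [hx, ENNReal.toReal_mul_ofReal_div_add_mul_ofReal (hc true) (hc false) hx01.1
    (sub_nonneg.mpr hx01.2)]
  simp only [c, ENNReal.toReal_mul, ENNReal.toReal_inv, hpdef, hqdef, hpf, hqf, div_eq_mul_inv]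

/-- Posterior correction formula (Saerens et al.): under label shift between the source
distribution `P` and the target distribution `Q` of a feature-label pair, with source prior
`p = P[Y=1] ∈ (0,1)`, target prior `q = Q[Y=1] ∈ (0,1)` and source posterior `η_P` satisfying
`0 < η_P(X) < 1` `P`-a.s., the target posterior satisfies `Q`-almost surely
`Q[Y=1 | X] = ((q/p)·η_P(X)) / ((q/p)·η_P(X) + ((1−q)/(1−p))·(1−η_P(X)))`. -/
theorem posterior_correction_labelShift
    {𝒳 : Type*} [MeasurableSpace 𝒳]
    (P Q : Measure (𝒳 × Bool)) [IsProbabilityMeasure P] [IsProbabilityMeasure Q]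
    (p q : ℝ)
    (hpdef : (P {ω : 𝒳 × Bool | ω.2 = true}).toReal = p) (hp : p ∈ Set.Ioo (0 : ℝ) 1)
    (hqdef : (Q {ω : 𝒳 × Bool | ω.2 = true}).toReal = q) (hq : q ∈ Set.Ioo (0 : ℝ) 1)
    -- label shift: the class-conditional feature distributions agree under `P` and `Q`
    (hshift : ∀ y : Bool,
      (P[|{ω : 𝒳 × Bool | ω.2 = y}]).map Prod.fst = (Q[|{ω : 𝒳 × Bool | ω.2 = y}]).map Prod.fst)
    (ηP : 𝒳 → ℝ) (hηP : Measurable ηP)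
    -- `ηP` is a version of `P[Y = 1 | X]`
    (hηPver : ∀ M : Set 𝒳, MeasurableSet M →
      ∫ x in M, ηP x ∂(P.map Prod.fst) = (P (M ×ˢ {true})).toReal)
    -- `0 < η_P(X) < 1` holds `P`-almost surely
    (hηP01 : ∀ᵐ x ∂(P.map Prod.fst), ηP x ∈ Set.Ioo (0 : ℝ) 1)
    (ηQ : 𝒳 → ℝ) (hηQ : Measurable ηQ)
    -- `ηQ` is a version of `Q[Y = 1 | X]`
    (hηQver : ∀ M : Set 𝒳, MeasurableSet M →
      ∫ x in M, ηQ x ∂(Q.map Prod.fst) = (Q (M ×ˢ {true})).toReal) :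
    ∀ᵐ x ∂(Q.map Prod.fst),
      ηQ x = (q / p * ηP x) / (q / p * ηP x + (1 - q) / (1 - p) * (1 - ηP x)) :=
  posterior_correction_labelShift_general P Q p q hpdef hp hqdef hshift ηP hηP hηPver hηP01 ηQ hηQ
    hηQver
end

section
/- Let P and Q be probability distributions of (X,Y) on 𝒳 × {0,1} related through factorizable joint shift: there are measurable functions g : 𝒳 → [0,∞) and b : {0,1} → [0,∞) such that Q[(X,Y) ∈ M] = E_P[1_M(X,Y)·g(X)·b(Y)] for all measurable M ⊆ 𝒳 × {0,1}. Assume b(0) > 0 and b(1) > 0, and let η_P(X) be a version of P[Y=1 | X]. Then Q-almost surely, Q[Y=1 | X] = (b(1)·η_P(X)) / (b(1)·η_P(X) + b(0)·(1−η_P(X))). -/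
/-!
Let `μ`, `ν` be the `X`-marginals of `P`, `Q`. A version `η` of `P[Y = 1 | X]` is only known
through its set integrals, which already force `0 ≤ η ≤ 1` `μ`-a.e.; hence
`P(M × {1}) = ∫_M η dμ` and `P(M × {0}) = ∫_M (1 - η) dμ`, i.e. `P` disintegrates along `X`.
Under FJS this gives `Q(M × {y}) = b(y) ∫_M π_y g dμ` with `π_1 = η`, `π_0 = 1 - η`, so `ν` has
`μ`-density `(b(1) η + b(0) (1 - η)) g`, and the claimed posterior `r` satisfies
`∫_M r dν = ∫_M b(1) η g dμ = Q(M × {1})`. Versions of a conditional probability being unique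
`ν`-a.e., `η_Q = r`.
-/

open MeasureTheory ProbabilityTheory Set
open scoped ENNReal

section SetIntegralBounds

variable {α : Type*} [MeasurableSpace α] {μ : Measure α} [IsFiniteMeasure μ] {f : α → ℝ}

/-- `f` is integrable on each of the sets `{|f| ≤ n}`, which cover the space. -/
theorem ae_nonneg_of_forall_setIntegral_nonneg_of_integrableOn (hf : Measurable f)
    (h : ∀ s, MeasurableSet s → IntegrableOn f s μ → 0 ≤ ∫ x in s, f x ∂μ) : 0 ≤ᵐ[μ] f := by
  let S : ℕ → Set α := fun n => {x | |f x| ≤ n}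
  have hS (n : ℕ) : MeasurableSet (S n) := measurableSet_le hf.abs measurable_const
  have hfS (n : ℕ) : IntegrableOn f (S n) μ :=
    IntegrableOn.of_bound (measure_lt_top μ _) hf.aestronglyMeasurable.restrict n
      ((ae_restrict_mem (hS n)).mono fun x hx => hx)
  have hcover : ⋃ n, S n = univ :=
    eq_univ_of_forall fun x => mem_iUnion.2 (exists_nat_ge |f x|)
  rw [Filter.EventuallyLE, ← Measure.restrict_univ (μ := μ), ← hcover, ae_restrict_iUnion_iff]
  exact fun n => ae_nonneg_restrict_of_forall_setIntegral_nonneg_inter (hfS n)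
    fun s hs _ => h _ (hs.inter (hS n)) ((hfS n).mono_set inter_subset_right)

theorem ae_mem_Icc_of_forall_setIntegral_le_measureReal (hf : Measurable f)
    (h0 : ∀ s, MeasurableSet s → 0 ≤ ∫ x in s, f x ∂μ)
    (h1 : ∀ s, MeasurableSet s → ∫ x in s, f x ∂μ ≤ μ.real s) :
    ∀ᵐ x ∂μ, f x ∈ Icc 0 1 := by
  have hf0 := ae_nonneg_of_forall_setIntegral_nonneg_of_integrableOn hf fun s hs _ => h0 s hs
  have hf1 : 0 ≤ᵐ[μ] fun x => 1 - f x :=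
    ae_nonneg_of_forall_setIntegral_nonneg_of_integrableOn (measurable_const.sub hf)
      fun s hs hint => by
        have hfs : IntegrableOn f s μ :=
          ((integrable_const 1).sub hint).congr (ae_of_all _ fun x => by simp)
        rw [integral_sub (integrable_const 1) hfs, setIntegral_const,
          smul_eq_mul, mul_one, sub_nonneg]
        exact h1 s hs
  filter_upwards [hf0, hf1] with x hx0 hx1
  exact ⟨hx0, sub_nonneg.1 hx1⟩

end SetIntegralBounds

section CondProb

variable {X Y : Type*} [MeasurableSpace X] [MeasurableSpace Y]

/-- `η` is a version of the conditional probability `P[Y ∈ T | X]`. -/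
def IsCondProbVersion (P : Measure (X × Y)) (T : Set Y) (η : X → ℝ) : Prop :=
  ∀ M : Set X, MeasurableSet M → ∫ x in M, η x ∂(P.map Prod.fst) = (P (M ×ˢ T)).toReal

theorem map_fst_apply_eq_measure_prod_univ (P : Measure (X × Y)) {M : Set X}
    (hM : MeasurableSet M) : P.map Prod.fst M = P (M ×ˢ univ) := by
  rw [Measure.map_apply measurable_fst hM, prod_univ]

theorem measure_prod_add_measure_prod_compl (P : Measure (X × Y)) {M : Set X}
    (hM : MeasurableSet M) {T : Set Y} (hT : MeasurableSet T) :
    P (M ×ˢ T) + P (M ×ˢ Tᶜ) = P (M ×ˢ univ) := by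
  rw [← measure_union (disjoint_prod.2 (Or.inr disjoint_compl_right)) (hM.prod hT.compl),
    ← prod_union, union_compl_self]

namespace IsCondProbVersion

variable {P : Measure (X × Y)} [IsFiniteMeasure P] {T : Set Y} {η : X → ℝ}

theorem ae_mem_Icc (hη : Measurable η) (h : IsCondProbVersion P T η) :
    ∀ᵐ x ∂(P.map Prod.fst), η x ∈ Icc 0 1 := by
  refine ae_mem_Icc_of_forall_setIntegral_le_measureReal hη
    (fun M hM => h M hM ▸ ENNReal.toReal_nonneg) fun M hM => ?_
  rw [h M hM, measureReal_def, map_fst_apply_eq_measure_prod_univ P hM]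
  exact ENNReal.toReal_mono (measure_ne_top P _) (measure_mono (prod_mono_right (subset_univ T)))

theorem integrable (hη : Measurable η) (h : IsCondProbVersion P T η) :
    Integrable η (P.map Prod.fst) :=
  Integrable.of_mem_Icc 0 1 hη.aemeasurable (h.ae_mem_Icc hη)

theorem compl (hη : Measurable η) (h : IsCondProbVersion P T η) (hT : MeasurableSet T) :
    IsCondProbVersion P Tᶜ (fun x => 1 - η x) := by
  intro M hM
  rw [integral_sub (integrable_const 1) (h.integrable hη).integrableOn,
    setIntegral_const, smul_eq_mul, mul_one, h M hM, measureReal_def,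
    map_fst_apply_eq_measure_prod_univ P hM, ← measure_prod_add_measure_prod_compl P hM hT,
    ENNReal.toReal_add (measure_ne_top P _) (measure_ne_top P _), add_sub_cancel_left]

theorem measure_prod_eq_setLIntegral (hη : Measurable η) (h : IsCondProbVersion P T η)
    {M : Set X} (hM : MeasurableSet M) :
    P (M ×ˢ T) = ∫⁻ x in M, ENNReal.ofReal (η x) ∂(P.map Prod.fst) := by
  rw [← ofReal_integral_eq_lintegral_ofReal (h.integrable hη).integrableOn
    (ae_restrict_of_ae ((h.ae_mem_Icc hη).mono fun _ hx => hx.1)), h M hM,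
    ENNReal.ofReal_toReal (measure_ne_top P _)]

theorem setLIntegral_prod_eq (hη : Measurable η) (h : IsCondProbVersion P T η)
    {f : X → ℝ≥0∞} (hf : Measurable f) {M : Set X} (hM : MeasurableSet M) :
    ∫⁻ ω in M ×ˢ T, f ω.1 ∂P = ∫⁻ x in M, ENNReal.ofReal (η x) * f x ∂(P.map Prod.fst) := by
  have hslab : (P.restrict (univ ×ˢ T)).map Prod.fst
      = (P.map Prod.fst).withDensity fun x => ENNReal.ofReal (η x) := by
    ext A hA
    rw [Measure.map_apply measurable_fst hA, Measure.restrict_apply (measurable_fst hA),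
      withDensity_apply _ hA, ← h.measure_prod_eq_setLIntegral hη hA, ← prod_univ,
      prod_inter_prod, inter_univ, univ_inter]
  calc ∫⁻ ω in M ×ˢ T, f ω.1 ∂P
      = ∫⁻ ω in Prod.fst ⁻¹' M, f ω.1 ∂(P.restrict (univ ×ˢ T)) := by
        rw [Measure.restrict_restrict (measurable_fst hM), ← prod_univ, prod_inter_prod,
          inter_univ, univ_inter]
    _ = ∫⁻ x in M, f x ∂((P.restrict (univ ×ˢ T)).map Prod.fst) :=
        (setLIntegral_map hM hf measurable_fst).symm
    _ = ∫⁻ x in M, ENNReal.ofReal (η x) * f x ∂(P.map Prod.fst) := by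
        rw [hslab, setLIntegral_withDensity_eq_setLIntegral_mul _ hη.ennreal_ofReal hf hM]
        rfl

theorem ae_eq_of_forall_setLIntegral_eq (hη : Measurable η) (h : IsCondProbVersion P T η)
    {η' : X → ℝ} (hη' : Measurable η') (hη'0 : 0 ≤ᵐ[P.map Prod.fst] η')
    (h' : ∀ M, MeasurableSet M →
      ∫⁻ x in M, ENNReal.ofReal (η' x) ∂(P.map Prod.fst) = P (M ×ˢ T)) :
    η =ᵐ[P.map Prod.fst] η' := by
  have hofReal :
      (fun x => ENNReal.ofReal (η x)) =ᵐ[P.map Prod.fst] fun x => ENNReal.ofReal (η' x) :=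
    ae_eq_of_forall_setLIntegral_eq_of_sigmaFinite hη.ennreal_ofReal hη'.ennreal_ofReal
      fun M hM _ => by rw [h' M hM, h.measure_prod_eq_setLIntegral hη hM]
  filter_upwards [hofReal, h.ae_mem_Icc hη, hη'0] with x hx hx0 hx'0
  exact (ENNReal.ofReal_eq_ofReal_iff hx0.1 hx'0).1 hx

end IsCondProbVersion

end CondProb

section FactorizableJointShift

variable {𝒳 : Type*} [MeasurableSpace 𝒳] {P Q : Measure (𝒳 × Bool)} [IsFiniteMeasure P]
  {G : 𝒳 → ℝ≥0∞} {b : Bool → ℝ} {η : 𝒳 → ℝ} {M : Set 𝒳}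

theorem measure_prod_singleton_eq_of_fjs
    (hQ : Q = P.withDensity fun ω => G ω.1 * ENNReal.ofReal (b ω.2)) (hG : Measurable G)
    {t : Bool} (hbt : 0 ≤ b t) (hη : Measurable η) (h : IsCondProbVersion P {t} η)
    (hM : MeasurableSet M) :
    Q (M ×ˢ {t}) = ∫⁻ x in M, ENNReal.ofReal (b t * η x) * G x ∂(P.map Prod.fst) := by
  have hMt : MeasurableSet (M ×ˢ {t}) := hM.prod (measurableSet_singleton t)
  rw [hQ, withDensity_apply _ hMt]
  calc ∫⁻ ω in M ×ˢ {t}, G ω.1 * ENNReal.ofReal (b ω.2) ∂P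
      = ∫⁻ ω in M ×ˢ {t}, ENNReal.ofReal (b t) * G ω.1 ∂P :=
        setLIntegral_congr_fun hMt fun ω hω => by rw [mem_singleton_iff.1 hω.2, mul_comm]
    _ = ∫⁻ x in M, ENNReal.ofReal (η x) * (ENNReal.ofReal (b t) * G x) ∂(P.map Prod.fst) :=
        h.setLIntegral_prod_eq hη (measurable_const.mul hG) hM
    _ = ∫⁻ x in M, ENNReal.ofReal (b t * η x) * G x ∂(P.map Prod.fst) := by
        congr with x
        rw [ENNReal.ofReal_mul hbt]
        ring

theorem map_fst_eq_withDensity_of_fjs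
    (hQ : Q = P.withDensity fun ω => G ω.1 * ENNReal.ofReal (b ω.2)) (hG : Measurable G)
    (hb : ∀ y, 0 ≤ b y) (hη : Measurable η) (h : IsCondProbVersion P {true} η) :
    Q.map Prod.fst = (P.map Prod.fst).withDensity
      fun x => ENNReal.ofReal (b true * η x + b false * (1 - η x)) * G x := by
  have hfalse : IsCondProbVersion P {false} fun x => 1 - η x := by
    simpa [Bool.compl_singleton] using h.compl hη (measurableSet_singleton true)
  ext M hM
  rw [map_fst_apply_eq_measure_prod_univ Q hM,
    ← measure_prod_add_measure_prod_compl Q hM (measurableSet_singleton true),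
    Bool.compl_singleton, Bool.not_true, withDensity_apply _ hM,
    measure_prod_singleton_eq_of_fjs hQ hG (hb true) hη h hM,
    measure_prod_singleton_eq_of_fjs hQ hG (hb false) (measurable_const.sub hη) hfalse hM,
    ← lintegral_add_left (by fun_prop)]
  refine lintegral_congr_ae (ae_restrict_of_ae ((h.ae_mem_Icc hη).mono fun x hx => ?_))
  simp only [Pi.sub_apply]
  rw [← add_mul, ← ENNReal.ofReal_add (mul_nonneg (hb true) hx.1)
    (mul_nonneg (hb false) (sub_nonneg.2 hx.2))]

theorem setLIntegral_posterior_eq_of_fjs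
    (hQ : Q = P.withDensity fun ω => G ω.1 * ENNReal.ofReal (b ω.2)) (hG : Measurable G)
    (hb : ∀ y, 0 ≤ b y) (hη : Measurable η) (h : IsCondProbVersion P {true} η)
    (hM : MeasurableSet M) :
    ∫⁻ x in M, ENNReal.ofReal (b true * η x / (b true * η x + b false * (1 - η x)))
      ∂(Q.map Prod.fst) = Q (M ×ˢ {true}) := by
  rw [map_fst_eq_withDensity_of_fjs hQ hG hb hη h,
    setLIntegral_withDensity_eq_setLIntegral_mul _ (by fun_prop) (by fun_prop) hM,
    measure_prod_singleton_eq_of_fjs hQ hG (hb true) hη h hM]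
  refine lintegral_congr_ae (ae_restrict_of_ae ((h.ae_mem_Icc hη).mono fun x hx => ?_))
  have hp : 0 ≤ b true * η x := mul_nonneg (hb true) hx.1
  have hq : 0 ≤ b false * (1 - η x) := mul_nonneg (hb false) (sub_nonneg.2 hx.2)
  simp only [Pi.mul_apply]
  rw [mul_right_comm, ← ENNReal.ofReal_mul (add_nonneg hp hq),
    mul_div_cancel_of_imp' fun h0 => ((add_eq_zero_iff_of_nonneg hp hq).1 h0).1]

end FactorizableJointShift

theorem posterior_fjs_general
    {𝒳 : Type*} [MeasurableSpace 𝒳]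
    (P Q : Measure (𝒳 × Bool)) [IsProbabilityMeasure P] [IsProbabilityMeasure Q]
    (g : 𝒳 → ℝ) (hg : Measurable g)
    (b : Bool → ℝ) (hb0 : 0 < b false) (hb1 : 0 < b true)
    -- FJS: `(x,y) ↦ g(x)·b(y)` is a density of `Q` with respect to `P`
    (hfjs : ∀ M : Set (𝒳 × Bool), MeasurableSet M →
      Q M = ∫⁻ ω in M, ENNReal.ofReal (g ω.1 * b ω.2) ∂P)
    (ηP : 𝒳 → ℝ) (hηP : Measurable ηP)
    -- `ηP` is a version of `P[Y = 1 | X]`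
    (hηPver : ∀ M : Set 𝒳, MeasurableSet M →
      ∫ x in M, ηP x ∂(P.map Prod.fst) = (P (M ×ˢ {true})).toReal)
    (ηQ : 𝒳 → ℝ) (hηQ : Measurable ηQ)
    -- `ηQ` is a version of `Q[Y = 1 | X]`
    (hηQver : ∀ M : Set 𝒳, MeasurableSet M →
      ∫ x in M, ηQ x ∂(Q.map Prod.fst) = (Q (M ×ˢ {true})).toReal) :
    ∀ᵐ x ∂(Q.map Prod.fst),
      ηQ x = (b true * ηP x) / (b true * ηP x + b false * (1 - ηP x)) := by
  have hb : ∀ y, 0 ≤ b y := Bool.forall_bool.2 ⟨hb0.le, hb1.le⟩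
  let G : 𝒳 → ℝ≥0∞ := fun x => ENNReal.ofReal (g x)
  have hG : Measurable G := hg.ennreal_ofReal
  have hQ : Q = P.withDensity fun ω => G ω.1 * ENNReal.ofReal (b ω.2) :=
    Measure.ext fun M hM => by
      rw [hfjs M hM, withDensity_apply _ hM]
      simp_rw [G, ENNReal.ofReal_mul' (hb _)]
  have hPver : IsCondProbVersion P {true} ηP := hηPver
  have hQver : IsCondProbVersion Q {true} ηQ := hηQver
  have hνμ : Q.map Prod.fst ≪ P.map Prod.fst := by
    rw [map_fst_eq_withDensity_of_fjs hQ hG hb hηP hPver]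
    exact withDensity_absolutelyContinuous _ _
  have hpost0 : ∀ᵐ x ∂(Q.map Prod.fst),
      0 ≤ b true * ηP x / (b true * ηP x + b false * (1 - ηP x)) :=
    hνμ.ae_le ((hPver.ae_mem_Icc hηP).mono fun x hx =>
      div_nonneg (mul_nonneg (hb true) hx.1)
        (add_nonneg (mul_nonneg (hb true) hx.1) (mul_nonneg (hb false) (sub_nonneg.2 hx.2))))
  exact hQver.ae_eq_of_forall_setLIntegral_eq hηQ (by fun_prop) hpost0
    fun M hM => setLIntegral_posterior_eq_of_fjs hQ hG hb hηP hPver hM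

/-- Under factorizable joint shift (FJS) between the source distribution `P` and the target
distribution `Q` of a feature-label pair, i.e. `dQ/dP (x,y) = g(x)·b(y)` with `b(0), b(1) > 0`,
the target posterior satisfies `Q`-almost surely
`Q[Y=1 | X] = (b(1)·η_P(X)) / (b(1)·η_P(X) + b(0)·(1−η_P(X)))`. -/
theorem posterior_fjs
    {𝒳 : Type*} [MeasurableSpace 𝒳]
    (P Q : Measure (𝒳 × Bool)) [IsProbabilityMeasure P] [IsProbabilityMeasure Q]
    (g : 𝒳 → ℝ) (hg : Measurable g) (hg0 : ∀ x, 0 ≤ g x)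
    (b : Bool → ℝ) (hb0 : 0 < b false) (hb1 : 0 < b true)
    -- FJS: `(x,y) ↦ g(x)·b(y)` is a density of `Q` with respect to `P`
    (hfjs : ∀ M : Set (𝒳 × Bool), MeasurableSet M →
      Q M = ∫⁻ ω in M, ENNReal.ofReal (g ω.1 * b ω.2) ∂P)
    (ηP : 𝒳 → ℝ) (hηP : Measurable ηP)
    -- `ηP` is a version of `P[Y = 1 | X]`
    (hηPver : ∀ M : Set 𝒳, MeasurableSet M →
      ∫ x in M, ηP x ∂(P.map Prod.fst) = (P (M ×ˢ {true})).toReal)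
    (ηQ : 𝒳 → ℝ) (hηQ : Measurable ηQ)
    -- `ηQ` is a version of `Q[Y = 1 | X]`
    (hηQver : ∀ M : Set 𝒳, MeasurableSet M →
      ∫ x in M, ηQ x ∂(Q.map Prod.fst) = (Q (M ×ˢ {true})).toReal) :
    ∀ᵐ x ∂(Q.map Prod.fst),
      ηQ x = (b true * ηP x) / (b true * ηP x + b false * (1 - ηP x)) :=
  posterior_fjs_general P Q g hg b hb0 hb1 hfjs ηP hηP hηPver ηQ hηQ hηQver
end

section
/- Let Q be a probability measure, let U be a random variable with 0 < U < 1 Q-almost surely, and let p, q ∈ (0,1). Define g : (0,∞) → (0,1) by g(ρ) = E_Q[ ((q/p)·U) / ((q/p)·U + (1/ρ)·((1−q)/(1−p))·(1−U)) ]. Then g is continuous and strictly increasing on (0,∞), with g(ρ) → 0 as ρ → 0⁺ and g(ρ) → 1 as ρ → ∞. Consequently, there exists a unique ρ > 0 such that g(ρ) = q. -/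
open MeasureTheory Filter

/-- Existence and uniqueness of the FJS recalibration parameter: for a probability measure `Q`,
a random variable `U` with `0 < U < 1` a.s. and `p, q ∈ (0,1)`, the function
`g(ρ) = E_Q[((q/p)·U) / ((q/p)·U + (1/ρ)·((1−q)/(1−p))·(1−U))]` is continuous and strictly
increasing on `(0,∞)`, tends to `0` as `ρ → 0⁺` and to `1` as `ρ → ∞`; consequently there is a
unique `ρ > 0` with `g(ρ) = q`. -/
theorem fjs_parameter_exists_unique
    {Ω : Type*} [MeasurableSpace Ω] (Q : Measure Ω) [IsProbabilityMeasure Q]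
    (U : Ω → ℝ) (hU : Measurable U) (hU01 : ∀ᵐ ω ∂Q, U ω ∈ Set.Ioo (0 : ℝ) 1)
    (p q : ℝ) (hp : p ∈ Set.Ioo (0 : ℝ) 1) (hq : q ∈ Set.Ioo (0 : ℝ) 1) :
    let g : ℝ → ℝ := fun ρ =>
      ∫ ω, (q / p * U ω) / (q / p * U ω + 1 / ρ * ((1 - q) / (1 - p)) * (1 - U ω)) ∂Q
    ContinuousOn g (Set.Ioi (0 : ℝ)) ∧
    StrictMonoOn g (Set.Ioi (0 : ℝ)) ∧
    Tendsto g (nhdsWithin 0 (Set.Ioi (0 : ℝ))) (nhds 0) ∧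
    Tendsto g atTop (nhds 1) ∧
    ∃! ρ : ℝ, 0 < ρ ∧ g ρ = q := by
  intro g
  obtain ⟨hp0, hp1⟩ := hp
  obtain ⟨hq0, hq1⟩ := hq
  have hc : 0 < (1 - q) / (1 - p) := div_pos (by linarith) (by linarith)
  have hqp : 0 < q / p := div_pos hq0 hp0
  set f : ℝ → Ω → ℝ := fun ρ ω =>
    (q / p * U ω) / (q / p * U ω + 1 / ρ * ((1 - q) / (1 - p)) * (1 - U ω)) with hfdef
  have hmeas : ∀ ρ : ℝ, AEStronglyMeasurable (f ρ) Q := by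
    intro ρ
    apply Measurable.aestronglyMeasurable
    fun_prop
  have hbound : ∀ ρ : ℝ, 0 < ρ → ∀ᵐ ω ∂Q, f ρ ω ∈ Set.Ioo (0 : ℝ) 1 := by
    intro ρ hρ
    filter_upwards [hU01] with ω hω
    obtain ⟨h0, h1⟩ := hω
    have ha : 0 < q / p * U ω := mul_pos hqp h0
    have hb : 0 < 1 / ρ * ((1 - q) / (1 - p)) * (1 - U ω) :=
      mul_pos (mul_pos (by positivity) hc) (by linarith)
    constructor
    · exact div_pos ha (by linarith)
    · rw [div_lt_one (by linarith)]; linarith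
  have hnorm : ∀ ρ : ℝ, 0 < ρ → ∀ᵐ ω ∂Q, ‖f ρ ω‖ ≤ (1 : ℝ) := by
    intro ρ hρ
    filter_upwards [hbound ρ hρ] with ω hω
    rw [Real.norm_eq_abs, abs_of_pos hω.1]
    exact hω.2.le
  have hint : ∀ ρ : ℝ, 0 < ρ → Integrable (f ρ) Q := by
    intro ρ hρ
    exact Integrable.mono' (integrable_const 1) (hmeas ρ) (hnorm ρ hρ)
  -- continuity
  have hcont : ContinuousOn g (Set.Ioi (0 : ℝ)) := by
    intro ρ hρ
    have hρ : (0 : ℝ) < ρ := hρ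
    have key : Tendsto (fun ρ' => ∫ ω, f ρ' ω ∂Q) (nhdsWithin ρ (Set.Ioi 0))
        (nhds (∫ ω, f ρ ω ∂Q)) := by
      apply tendsto_integral_filter_of_dominated_convergence (fun _ => (1 : ℝ))
      · filter_upwards with ρ' using hmeas ρ'
      · filter_upwards [self_mem_nhdsWithin] with ρ' hρ' using hnorm ρ' hρ'
      · exact integrable_const 1
      · filter_upwards [hU01] with ω hω
        obtain ⟨h0, h1⟩ := hω
        have ha : 0 < q / p * U ω := mul_pos hqp h0
        have hb : 0 < 1 / ρ * ((1 - q) / (1 - p)) * (1 - U ω) :=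
          mul_pos (mul_pos (by positivity) hc) (by linarith)
        have hca : ContinuousAt (fun ρ' : ℝ => f ρ' ω) ρ := by
          apply ContinuousAt.div continuousAt_const
          · exact continuousAt_const.add
              (((continuousAt_const.div continuousAt_id hρ.ne').mul continuousAt_const).mul
                continuousAt_const)
          · positivity
        exact hca.tendsto.mono_left nhdsWithin_le_nhds
    exact key
  -- strict monotonicity
  have hmono : StrictMonoOn g (Set.Ioi (0 : ℝ)) := by
    intro ρ₁ h₁ ρ₂ h₂ hlt
    have h₁ : (0 : ℝ) < ρ₁ := h₁
    have h₂ : (0 : ℝ) < ρ₂ := h₂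
    have hlt' : ∀ᵐ ω ∂Q, f ρ₁ ω < f ρ₂ ω := by
      filter_upwards [hU01] with ω hω
      obtain ⟨h0, h1⟩ := hω
      have ha : 0 < q / p * U ω := mul_pos hqp h0
      have hu : 0 < 1 - U ω := by linarith
      have hbc : 0 < (1 - q) / (1 - p) * (1 - U ω) := mul_pos hc hu
      have hd2 : 0 < q / p * U ω + 1 / ρ₂ * ((1 - q) / (1 - p)) * (1 - U ω) := by
        have : 0 < 1 / ρ₂ * ((1 - q) / (1 - p)) * (1 - U ω) :=
          mul_pos (mul_pos (by positivity) hc) hu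
        linarith
      apply div_lt_div_of_pos_left ha hd2
      have hinv : 1 / ρ₂ < 1 / ρ₁ := one_div_lt_one_div_of_lt h₁ hlt
      nlinarith
    have hdiff : 0 < ∫ ω, (f ρ₂ ω - f ρ₁ ω) ∂Q := by
      have hi : Integrable (fun ω => f ρ₂ ω - f ρ₁ ω) Q := (hint ρ₂ h₂).sub (hint ρ₁ h₁)
      rw [integral_pos_iff_support_of_nonneg_ae
        (by filter_upwards [hlt'] with ω h using sub_nonneg.mpr h.le) hi]
      have hS : Q (Function.support (fun ω => f ρ₂ ω - f ρ₁ ω))ᶜ = 0 := by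
        have : ∀ᵐ ω ∂Q, ω ∈ Function.support (fun ω => f ρ₂ ω - f ρ₁ ω) := by
          filter_upwards [hlt'] with ω h
          simp only [Function.mem_support]
          intro hz
          linarith [sub_pos.mpr h]
        simpa [ae_iff, Set.compl_def] using this
      by_contra hcon
      push_neg at hcon
      have hz : Q (Function.support (fun ω => f ρ₂ ω - f ρ₁ ω)) = 0 := le_antisymm hcon bot_le
      have := measure_union_le (μ := Q) (Function.support (fun ω => f ρ₂ ω - f ρ₁ ω))
        (Function.support (fun ω => f ρ₂ ω - f ρ₁ ω))ᶜ
      rw [Set.union_compl_self, hz, hS, measure_univ] at this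
      simp at this
    have : g ρ₂ - g ρ₁ = ∫ ω, (f ρ₂ ω - f ρ₁ ω) ∂Q := by
      rw [integral_sub (hint ρ₂ h₂) (hint ρ₁ h₁)]
    linarith [this ▸ hdiff]
  -- limit at 0+
  have hlim0 : Tendsto g (nhdsWithin 0 (Set.Ioi (0 : ℝ))) (nhds 0) := by
    have key : Tendsto (fun ρ' => ∫ ω, f ρ' ω ∂Q) (nhdsWithin 0 (Set.Ioi 0))
        (nhds (∫ _ω, (0 : ℝ) ∂Q)) := by
      apply tendsto_integral_filter_of_dominated_convergence (fun _ => (1 : ℝ))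
      · filter_upwards with ρ' using hmeas ρ'
      · filter_upwards [self_mem_nhdsWithin] with ρ' hρ' using hnorm ρ' hρ'
      · exact integrable_const 1
      · filter_upwards [hU01] with ω hω
        obtain ⟨h0, h1⟩ := hω
        have ha : 0 < q / p * U ω := mul_pos hqp h0
        have hbc : 0 < (1 - q) / (1 - p) * (1 - U ω) := mul_pos hc (by linarith)
        have hinv : Tendsto (fun ρ' : ℝ => 1 / ρ') (nhdsWithin 0 (Set.Ioi 0)) atTop := by
          simpa [one_div] using tendsto_inv_nhdsGT_zero
        have hden : Tendsto (fun ρ' : ℝ => q / p * U ω +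
            1 / ρ' * ((1 - q) / (1 - p)) * (1 - U ω)) (nhdsWithin 0 (Set.Ioi 0)) atTop := by
          apply tendsto_atTop_add_const_left
          have : Tendsto (fun ρ' : ℝ => 1 / ρ' * (((1 - q) / (1 - p)) * (1 - U ω)))
              (nhdsWithin 0 (Set.Ioi 0)) atTop := hinv.atTop_mul_const hbc
          simpa [mul_assoc] using this
        exact Tendsto.div_atTop tendsto_const_nhds hden
    simpa using key
  -- limit at ∞
  have hlim1 : Tendsto g atTop (nhds 1) := by
    have key : Tendsto (fun ρ' => ∫ ω, f ρ' ω ∂Q) atTop (nhds (∫ _ω, (1 : ℝ) ∂Q)) := by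
      apply tendsto_integral_filter_of_dominated_convergence (fun _ => (1 : ℝ))
      · filter_upwards with ρ' using hmeas ρ'
      · filter_upwards [eventually_gt_atTop 0] with ρ' hρ' using hnorm ρ' hρ'
      · exact integrable_const 1
      · filter_upwards [hU01] with ω hω
        obtain ⟨h0, h1⟩ := hω
        have ha : 0 < q / p * U ω := mul_pos hqp h0
        have hinv : Tendsto (fun ρ' : ℝ => 1 / ρ') atTop (nhds 0) := by
          simpa [one_div] using tendsto_inv_atTop_zero
        have hden : Tendsto (fun ρ' : ℝ => q / p * U ω +
            1 / ρ' * ((1 - q) / (1 - p)) * (1 - U ω)) atTop (nhds (q / p * U ω)) := by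
          have : Tendsto (fun ρ' : ℝ => 1 / ρ' * ((1 - q) / (1 - p)) * (1 - U ω)) atTop
              (nhds 0) := by
            simpa using (hinv.mul_const ((1 - q) / (1 - p))).mul_const (1 - U ω)
          simpa using tendsto_const_nhds.add this
        have := Tendsto.div (tendsto_const_nhds (x := q / p * U ω)) hden ha.ne'
        simpa [hfdef, Pi.div_def, one_div, div_self ha.ne'] using this
    simpa using key
  refine ⟨hcont, hmono, hlim0, hlim1, ?_⟩
  -- existence of points below and above q
  have h1 : ∃ ρ₁ : ℝ, ρ₁ ∈ Set.Ioi (0 : ℝ) ∧ g ρ₁ < q := by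
    have he : ∀ᶠ ρ in nhdsWithin 0 (Set.Ioi (0 : ℝ)), g ρ < q :=
      hlim0 (Iio_mem_nhds hq0)
    exact (eventually_mem_nhdsWithin.and he).exists.imp (fun ρ h => ⟨h.1, h.2⟩)
  have h2 : ∃ ρ₂ : ℝ, ρ₂ ∈ Set.Ioi (0 : ℝ) ∧ q < g ρ₂ := by
    have he : ∀ᶠ ρ in atTop, q < g ρ := hlim1 (Ioi_mem_nhds hq1)
    exact ((eventually_gt_atTop 0).and he).exists.imp (fun ρ h => ⟨h.1, h.2⟩)
  obtain ⟨ρ₁, hρ₁, hg₁⟩ := h1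
  obtain ⟨ρ₂, hρ₂, hg₂⟩ := h2
  have h12 : ρ₁ < ρ₂ := by
    by_contra hcon
    push_neg at hcon
    rcases eq_or_lt_of_le hcon with h | h
    · rw [h] at hg₂; linarith
    · have := hmono hρ₂ hρ₁ h; linarith
  have hsub : Set.Icc ρ₁ ρ₂ ⊆ Set.Ioi (0 : ℝ) := fun x hx => lt_of_lt_of_le hρ₁ hx.1
  have hiv := intermediate_value_Icc h12.le (hcont.mono hsub)
  have hqin : q ∈ Set.Icc (g ρ₁) (g ρ₂) := ⟨hg₁.le, hg₂.le⟩
  obtain ⟨ρ, hρmem, hgρ⟩ := hiv hqin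
  have hρpos : (0 : ℝ) < ρ := hsub hρmem
  refine ⟨ρ, ⟨hρpos, hgρ⟩, ?_⟩
  intro ρ' ⟨hρ'pos, hgρ'⟩
  exact hmono.injOn hρ'pos hρpos (hgρ'.trans hgρ.symm)
end
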